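/- arXiv:2508.06487 — 2 statements merged into one kernel-verified Lean document; each statement's English description precedes it below -/
import Mathlib

section
/- Let d ≥ 1 and M > 0. There exists a constant C > 0 depending only on d and M such that the following holds. Let u : ℝ × ℝ^d → ℝ be continuously differentiable with |∂_t u(t,x)| ≤ M and |∂_{x_i} u(t,x)| ≤ M for all (t,x) and all i, let φ : ℝ^d → ℝ be three times continuously differentiable with all partial derivatives of order ≤ 3 bounded in absolute value by M, and suppose u(T, x) = φ(x) for all x ∈ ℝ^d, where T ∈ ℝ. Let A ∈ ℝ^{d×d} be symmetric and β ∈ ℝ^d with all entries bounded in absolute value by M; let μ ∈ (0, M], γ̄, ψ̄, κ ∈ [−M, M], z ∈ ℝ^d, and let n ∈ ℝ^d be a unit vector. Assume the sticky boundary relation at (T,z): −μ 𝒜_{A,β}φ(z) + ∇φ(z)·n + γ̄ φ(z) = ψ̄. Let h ∈ (0,1), r ∈ (0, √h], and t′ ∈ ℝ with T ≤ t′ ≤ T + h. Let Y_k > 0, Z′ ∈ ℝ, and define Y′ = (1 + hκ)Y_k, Y_χ = Y′ + 2rγ̄ Y_k + 2r²γ̄² Y_k, and Z_χ = Z′ +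 (−2rμ 𝒜_{A,β}φ(z) − 2r²γ̄μ 𝒜_{A,β}φ(z) − 2rψ̄ − 2r²γ̄ψ̄) Y_k. Then |u(T, z + rn)·Y_χ + Z_χ − u(t′, z − rn)·Y′ − Z′| ≤ C h Y_k. -/
/-!
After substituting the boundary relation for `ψ̄`, the generator terms `μ 𝒜φ(z)` cancel and
the error divided by `Y_k` becomes
`(φ(z+rn) - u(t', z-rn))(1+hκ) - 2r ∇φ(z)·n - 2r²γ̄ ∇φ(z)·n + 2rγ̄(1+rγ̄)(φ(z+rn) - φ(z))`.
The centred difference `φ(z+rn) - φ(z-rn)` agrees with `2r ∇φ(z)·n` up to `O(r²)`, the time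
increment `φ(z-rn) - u(t', z-rn)` is `O(h)`, and every other term carries a factor `r²` or `rh`;
since `r² ≤ h` all of them are `O(h)`.
-/

/-- The second-order differential operator
`𝒜_{A,β} v (y) = (1/2) ∑_{i,j} A i j ∂²v/∂yᵢ∂yⱼ (y) + ∑ i, β i ∂v/∂yᵢ (y)`. -/
noncomputable def stickyGen {d : ℕ} (A : Matrix (Fin d) (Fin d) ℝ) (β : Fin d → ℝ)
    (v : (Fin d → ℝ) → ℝ) (y : Fin d → ℝ) : ℝ :=
  (1 / 2) * ∑ i, ∑ j, A i j *
      iteratedFDeriv ℝ 2 v y ![Pi.single i 1, Pi.single j 1]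
    + ∑ i, β i * fderiv ℝ v y (Pi.single i 1)

lemma norm_le_one_of_sum_sq_eq_one {ι : Type*} [Fintype ι] {n : ι → ℝ}
    (hn : ∑ i, n i ^ 2 = 1) : ‖n‖ ≤ 1 := by
  refine (pi_norm_le_iff_of_nonneg zero_le_one).2 fun i => ?_
  rw [Real.norm_eq_abs, ← sq_le_one_iff_abs_le_one, ← hn]
  exact Finset.single_le_sum (fun j _ => sq_nonneg (n j)) (Finset.mem_univ i)

lemma abs_sub_le_of_abs_deriv_le {g : ℝ → ℝ} {K : ℝ} (hg : Differentiable ℝ g)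
    (hK : ∀ t, |deriv g t| ≤ K) (s t : ℝ) : |g t - g s| ≤ K * |t - s| :=
  convex_univ.norm_image_sub_le_of_norm_deriv_le (fun τ _ => hg τ) (fun τ _ => hK τ)
    (Set.mem_univ s) (Set.mem_univ t)

lemma abs_sub_le_of_norm_fderiv_le {E : Type*} [NormedAddCommGroup E] [NormedSpace ℝ E]
    {f : E → ℝ} {K : ℝ} (hf : Differentiable ℝ f) (hK : ∀ x, ‖fderiv ℝ f x‖ ≤ K) (x y : E) :
    |f y - f x| ≤ K * ‖y - x‖ :=
  convex_univ.norm_image_sub_le_of_norm_fderiv_le (fun z _ => hf z) (fun z _ => hK z)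
    (Set.mem_univ x) (Set.mem_univ y)

lemma abs_sub_sub_two_mul_fderiv_le {E : Type*} [NormedAddCommGroup E] [NormedSpace ℝ E]
    {f : E → ℝ} {K : ℝ} (hf : ContDiff ℝ 2 f)
    (hK : ∀ x, ‖fderiv ℝ (fderiv ℝ f) x‖ ≤ K) (z v : E) :
    |f (z + v) - f (z - v) - 2 * fderiv ℝ f z v| ≤ 2 * K * ‖v‖ ^ 2 := by
  have hdf : Differentiable ℝ f := hf.differentiable (by norm_num)
  have hdf' : Differentiable ℝ (fderiv ℝ f) :=
    (hf.fderiv_right (m := 1) (by norm_num)).differentiable (by norm_num)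
  have hK0 : 0 ≤ K := (norm_nonneg (fderiv ℝ (fderiv ℝ f) z)).trans (hK z)
  have hslope : ∀ y ∈ Metric.closedBall z ‖v‖, ‖fderiv ℝ f y - fderiv ℝ f z‖ ≤ K * ‖v‖ := by
    intro y hy
    calc ‖fderiv ℝ f y - fderiv ℝ f z‖ ≤ K * ‖y - z‖ :=
          convex_univ.norm_image_sub_le_of_norm_fderiv_le (fun x _ => hdf' x)
            (fun x _ => hK x) (Set.mem_univ z) (Set.mem_univ y)
      _ ≤ K * ‖v‖ := mul_le_mul_of_nonneg_left (mem_closedBall_iff_norm.1 hy) hK0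
  -- mean value theorem for `f` minus its linearisation at `z`, on the ball through `z ± v`
  have hmvt := (convex_closedBall z ‖v‖).norm_image_sub_le_of_norm_hasFDerivWithin_le
    (f := fun y => f y - fderiv ℝ f z y)
    (fun y _ => ((hdf y).hasFDerivAt.sub (fderiv ℝ f z).hasFDerivAt).hasFDerivWithinAt) hslope
    (x := z - v) (y := z + v) (by simp) (by simp)
  have hdiff : z + v - (z - v) = (2 : ℝ) • v := by rw [two_smul]; abel
  rw [Real.norm_eq_abs, hdiff, norm_smul, Real.norm_two] at hmvt
  calc |f (z + v) - f (z - v) - 2 * fderiv ℝ f z v|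
      = |f (z + v) - fderiv ℝ f z (z + v) - (f (z - v) - fderiv ℝ f z (z - v))| := by
        congr 1
        rw [show fderiv ℝ f z (z + v) = fderiv ℝ f z (z - v) + 2 * fderiv ℝ f z v by
          rw [← smul_eq_mul, ← map_smul, ← map_add, ← hdiff, add_sub_cancel]]
        ring
    _ ≤ K * ‖v‖ * (2 * ‖v‖) := hmvt
    _ = 2 * K * ‖v‖ ^ 2 := by ring

lemma abs_mul_le_mul_of_abs_le {x y X Y : ℝ} (hx : |x| ≤ X) (hy : |y| ≤ Y) :
    |x * y| ≤ X * Y := by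
  rw [abs_mul]
  exact mul_le_mul hx hy (abs_nonneg _) ((abs_nonneg _).trans hx)

/-- The scalar core of the estimate, with `a = φ(z+rn)`, `c = φ(z-rn)`, `b = u(t', z-rn)`,
`p = φ(z)` and `D = ∇φ(z)·n`. -/
lemma abs_caseIV_residual_le {M h r κ γ a b c p D : ℝ} (hM : 0 ≤ M) (hh : 0 < h) (hh1 : h ≤ 1)
    (hr : 0 ≤ r) (hrh : r ^ 2 ≤ h) (hκ : |κ| ≤ M) (hγ : |γ| ≤ M) (hD : |D| ≤ M)
    (hcentred : |a - c - 2 * r * D| ≤ 2 * M * h) (htime : |c - b| ≤ M * h)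
    (hspace : |a - p| ≤ M * r) :
    |(a - b) * (1 + h * κ) - 2 * r * D - 2 * r ^ 2 * γ * D + 2 * r * γ * (1 + r * γ) * (a - p)|
      ≤ (3 * M * (1 + M) + 4 * M ^ 2 + 2 * M ^ 2 * (1 + M)) * h := by
  have hr1 : r ≤ 1 := by nlinarith
  have hhκ : |1 + h * κ| ≤ 1 + M := by
    calc |1 + h * κ| ≤ 1 + h * |κ| := by
          simpa [abs_mul, abs_of_pos hh] using abs_add_le 1 (h * κ)
      _ ≤ 1 + M := by nlinarith [abs_nonneg κ]
  have hrγ : |1 + r * γ| ≤ 1 + M := by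
    calc |1 + r * γ| ≤ 1 + r * |γ| := by
          simpa [abs_mul, abs_of_nonneg hr] using abs_add_le 1 (r * γ)
      _ ≤ 1 + M := by nlinarith [abs_nonneg γ]
  have h2r : |2 * r| ≤ 2 := by rw [abs_of_nonneg (by positivity)]; linarith
  have h2rr : |2 * r| ≤ 2 * r := (abs_of_nonneg (by positivity)).le
  have h2r2 : |2 * r ^ 2| ≤ 2 * h := by rw [abs_of_nonneg (by positivity)]; linarith
  have hhκ' : |h * κ| ≤ h * M := by
    rw [abs_mul, abs_of_pos hh]; exact mul_le_mul_of_nonneg_left hκ hh.le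
  have hsplit : (a - b) * (1 + h * κ) - 2 * r * D - 2 * r ^ 2 * γ * D
        + 2 * r * γ * (1 + r * γ) * (a - p)
      = (a - c - 2 * r * D) * (1 + h * κ) + (c - b) * (1 + h * κ) + 2 * r * D * (h * κ)
        - 2 * r ^ 2 * γ * D + 2 * r * ((1 + r * γ) * γ) * (a - p) := by ring
  have h1 := abs_mul_le_mul_of_abs_le hcentred hhκ
  have h2 := abs_mul_le_mul_of_abs_le htime hhκ
  have h3 := abs_mul_le_mul_of_abs_le (abs_mul_le_mul_of_abs_le h2r hD) hhκ'
  have h4 := abs_mul_le_mul_of_abs_le (abs_mul_le_mul_of_abs_le h2r2 hγ) hD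
  have h5 := abs_mul_le_mul_of_abs_le
    (abs_mul_le_mul_of_abs_le h2rr (abs_mul_le_mul_of_abs_le hrγ hγ)) hspace
  have h5' : 2 * r * ((1 + M) * M) * (M * r) ≤ 2 * M ^ 2 * (1 + M) * h := by
    have : 2 * r * ((1 + M) * M) * (M * r) = 2 * M ^ 2 * (1 + M) * r ^ 2 := by ring
    rw [this]; gcongr
  rw [hsplit]
  calc _ ≤ |(a - c - 2 * r * D) * (1 + h * κ)| + |(c - b) * (1 + h * κ)|
        + |2 * r * D * (h * κ)| + |2 * r ^ 2 * γ * D|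
        + |2 * r * ((1 + r * γ) * γ) * (a - p)| := by
        refine (abs_add_le _ _).trans (add_le_add_left ?_ _)
        refine (abs_sub _ _).trans (add_le_add_left ?_ _)
        exact (abs_add_le _ _).trans (add_le_add_left (abs_add_le _ _) _)
    _ ≤ _ := by linarith

lemma caseIV_error_eq (a b p D G h r κ γ μ Y Z : ℝ) :
    a * ((1 + h * κ) * Y + 2 * r * γ * Y + 2 * r ^ 2 * γ ^ 2 * Y)
        + (Z + (-(2 * r * μ * G) - 2 * r ^ 2 * γ * μ * G
          - 2 * r * (-μ * G + D + γ * p) - 2 * r ^ 2 * γ * (-μ * G + D + γ * p)) * Y)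
        - b * ((1 + h * κ) * Y) - Z
      = Y * ((a - b) * (1 + h * κ) - 2 * r * D - 2 * r ^ 2 * γ * D
          + 2 * r * γ * (1 + r * γ) * (a - p)) := by
  ring

theorem sticky_euler_caseIV_one_step_general (d : ℕ) (M : ℝ) (hM : 0 < M) :
    ∃ C : ℝ, 0 < C ∧
      ∀ u : ℝ × (Fin d → ℝ) → ℝ, ContDiff ℝ 1 u →
      (∀ (t : ℝ) (x : Fin d → ℝ), |deriv (fun τ => u (τ, x)) t| ≤ M) →
      (∀ (t : ℝ) (x : Fin d → ℝ) (i : Fin d),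
        |fderiv ℝ (fun y => u (t, y)) x (Pi.single i 1)| ≤ M) →
      ∀ φ : (Fin d → ℝ) → ℝ, ContDiff ℝ 3 φ →
      (∀ m : ℕ, m ≤ 3 → ∀ y : Fin d → ℝ, ‖iteratedFDeriv ℝ m φ y‖ ≤ M) →
      ∀ T : ℝ, (∀ x : Fin d → ℝ, u (T, x) = φ x) →
      ∀ A : Matrix (Fin d) (Fin d) ℝ, A.IsSymm → (∀ i j, |A i j| ≤ M) →
      ∀ β : Fin d → ℝ, (∀ i, |β i| ≤ M) →
      ∀ μ : ℝ, 0 < μ → μ ≤ M →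
      ∀ γ ψ κ : ℝ, |γ| ≤ M → |ψ| ≤ M → |κ| ≤ M →
      ∀ z n : Fin d → ℝ, (∑ i, (n i) ^ 2 = 1) →
      -- the sticky (second-order) boundary relation holds at (T, z)
      (-μ * stickyGen A β φ z + fderiv ℝ φ z n + γ * φ z = ψ) →
      ∀ h r t' : ℝ, 0 < h → h < 1 → 0 < r → r ≤ Real.sqrt h →
      T ≤ t' → t' ≤ T + h →
      ∀ Yk Z' : ℝ, 0 < Yk →
      |u (T, z + r • n) *
            ((1 + h * κ) * Yk + 2 * r * γ * Yk + 2 * r ^ 2 * γ ^ 2 * Yk)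
          + (Z' + (-(2 * r * μ * stickyGen A β φ z)
              - 2 * r ^ 2 * γ * μ * stickyGen A β φ z
              - 2 * r * ψ - 2 * r ^ 2 * γ * ψ) * Yk)
          - u (t', z - r • n) * ((1 + h * κ) * Yk) - Z'|
        ≤ C * h * Yk := by
  refine ⟨3 * M * (1 + M) + 4 * M ^ 2 + 2 * M ^ 2 * (1 + M), by positivity, ?_⟩
  intro u hu hut _ φ hφ hφM T huT A _ _ β _ μ _ _ γ ψ κ hγ _ hκ z n hn hrel h r t' hh hh1 hr
    hrh ht ht' Yk Z' hYk
  subst hrel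
  have hn1 : ‖n‖ ≤ 1 := norm_le_one_of_sum_sq_eq_one hn
  have hrn : ‖r • n‖ ≤ r := by
    rw [norm_smul, Real.norm_of_nonneg hr.le]; exact mul_le_of_le_one_right hr.le hn1
  have hr2 : r ^ 2 ≤ h := (Real.le_sqrt hr.le hh.le).1 hrh
  have hφ1 : ∀ y, ‖fderiv ℝ φ y‖ ≤ M := fun y => by simpa using hφM 1 (by norm_num) y
  have hφ2 : ∀ y, ‖fderiv ℝ (fderiv ℝ φ) y‖ ≤ M := fun y => by
    simpa [← norm_iteratedFDeriv_fderiv] using hφM 2 (by norm_num) y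
  have hcentred : |φ (z + r • n) - φ (z - r • n) - 2 * r * fderiv ℝ φ z n| ≤ 2 * M * h := by
    have := abs_sub_sub_two_mul_fderiv_le (hφ.of_le (by norm_num)) hφ2 z (r • n)
    rw [map_smul, smul_eq_mul, ← mul_assoc] at this
    exact this.trans (by gcongr; exact (pow_le_pow_left₀ (norm_nonneg _) hrn 2).trans hr2)
  have htime : |φ (z - r • n) - u (t', z - r • n)| ≤ M * h := by
    rw [← huT, abs_sub_comm]
    refine (abs_sub_le_of_abs_deriv_le ((hu.differentiable one_ne_zero).comp (by fun_prop))
      (fun τ => hut τ _) T t').trans ?_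
    rw [abs_of_nonneg (by linarith)]; gcongr; linarith
  have hspace : |φ (z + r • n) - φ z| ≤ M * r := by
    refine (abs_sub_le_of_norm_fderiv_le (hφ.differentiable (by norm_num)) hφ1 _ _).trans ?_
    rw [add_sub_cancel_left]; gcongr
  have hD : |fderiv ℝ φ z n| ≤ M :=
    ((fderiv ℝ φ z).le_of_opNorm_le (hφ1 z) n).trans (mul_le_of_le_one_right hM.le hn1)
  have hres := abs_caseIV_residual_le hM.le hh hh1.le hr.le hr2 hκ hγ hD hcentred htime hspace
  rw [huT, caseIV_error_eq, abs_mul, abs_of_pos hYk]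
  exact (mul_le_mul_of_nonneg_left hres hYk.le).trans_eq (by ring)

/-- Lemma 4.5 (Case IV of the sticky Euler scheme): one-step error estimate for the
final step in which both the spatial domain and the terminal time are overshot. -/
theorem sticky_euler_caseIV_one_step (d : ℕ) (hd : 1 ≤ d) (M : ℝ) (hM : 0 < M) :
    ∃ C : ℝ, 0 < C ∧
      ∀ u : ℝ × (Fin d → ℝ) → ℝ, ContDiff ℝ 1 u →
      (∀ (t : ℝ) (x : Fin d → ℝ), |deriv (fun τ => u (τ, x)) t| ≤ M) →
      (∀ (t : ℝ) (x : Fin d → ℝ) (i : Fin d),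
        |fderiv ℝ (fun y => u (t, y)) x (Pi.single i 1)| ≤ M) →
      ∀ φ : (Fin d → ℝ) → ℝ, ContDiff ℝ 3 φ →
      (∀ m : ℕ, m ≤ 3 → ∀ y : Fin d → ℝ, ‖iteratedFDeriv ℝ m φ y‖ ≤ M) →
      ∀ T : ℝ, (∀ x : Fin d → ℝ, u (T, x) = φ x) →
      ∀ A : Matrix (Fin d) (Fin d) ℝ, A.IsSymm → (∀ i j, |A i j| ≤ M) →
      ∀ β : Fin d → ℝ, (∀ i, |β i| ≤ M) →
      ∀ μ : ℝ, 0 < μ → μ ≤ M →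
      ∀ γ ψ κ : ℝ, |γ| ≤ M → |ψ| ≤ M → |κ| ≤ M →
      ∀ z n : Fin d → ℝ, (∑ i, (n i) ^ 2 = 1) →
      -- the sticky (second-order) boundary relation holds at (T, z)
      (-μ * stickyGen A β φ z + fderiv ℝ φ z n + γ * φ z = ψ) →
      ∀ h r t' : ℝ, 0 < h → h < 1 → 0 < r → r ≤ Real.sqrt h →
      T ≤ t' → t' ≤ T + h →
      ∀ Yk Z' : ℝ, 0 < Yk →
      |u (T, z + r • n) *
            ((1 + h * κ) * Yk + 2 * r * γ * Yk + 2 * r ^ 2 * γ ^ 2 * Yk)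
          + (Z' + (-(2 * r * μ * stickyGen A β φ z)
              - 2 * r ^ 2 * γ * μ * stickyGen A β φ z
              - 2 * r * ψ - 2 * r ^ 2 * γ * ψ) * Yk)
          - u (t', z - r • n) * ((1 + h * κ) * Yk) - Z'|
        ≤ C * h * Yk :=
  sticky_euler_caseIV_one_step_general d M hM
end

section
/- Let d ≥ 1, M > 0 and K₂ > 0. There exist K₁ > 0 and h₀ ∈ (0,1), depending only on d, M and K₂, such that the following holds. Let B : ℝ^d → ℝ be twice continuously differentiable with |B(y)| ≤ M, |∂B/∂y_i(y)| ≤ M and |∂²B/∂y_i∂y_j(y)| ≤ M for all y ∈ ℝ^d and all i, j. Let β ∈ ℝ^d and S ∈ ℝ^{d×d} have all entries bounded in absolute value by M, let x ∈ ℝ^d and h ∈ (0, h₀], and let ξ be a random vector uniformly distributed on {−1,1}^d (its d components are independent, each equal to ±1 with probability 1/2). Then E[ exp( −K₁ h + K₂ ( B(x + hβ + √h · Sξ) − B(x) ) ) ] ≤ 1 − h. -/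
/-!
Write `Δ_ε = B(x + hβ + √h Sξ_ε) - B(x)`. The mean value inequality gives `|Δ_ε| = O(√h)`, and
Taylor's formula gives `Δ_ε = √h DB(x)(Sξ_ε) + O(h)`, whose leading term is linear in `ξ_ε` and
so averages to zero over the sign patterns: the mean of `Δ_ε` is `O(h)`. Hence
`u_ε = -K₁h + K₂Δ_ε` is small, and `exp u ≤ 1 + u + u²` bounds the mean of `exp u_ε` by
`1 - K₁h + O(h)`, which is at most `1 - h` once `K₁` exceeds the constant in `O(h)`.
-/

open Finset Matrix Real

def signVector {ι : Type*} (ε : ι → Bool) : ι → ℝ := fun i => if ε i then 1 else -1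

lemma signVector_not {ι : Type*} (ε : ι → Bool) :
    signVector (fun i => !ε i) = -signVector ε := by
  funext i
  cases h : ε i <;> simp [signVector, h]

lemma norm_signVector_le {ι : Type*} [Fintype ι] (ε : ι → Bool) : ‖signVector ε‖ ≤ 1 :=
  (pi_norm_le_iff_of_nonneg zero_le_one).2 fun i => by cases h : ε i <;> simp [signVector, h]

lemma sum_signVector (ι : Type*) [Fintype ι] [DecidableEq ι] :
    ∑ ε : ι → Bool, signVector ε = 0 := by
  let flip : (ι → Bool) ≃ (ι → Bool) := .piCongrRight fun _ => .boolNot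
  have h := flip.sum_comp signVector
  have hflip : ∀ ε, signVector (flip ε) = -signVector ε := signVector_not
  rw [sum_congr rfl fun ε _ => hflip ε, sum_neg_distrib] at h
  exact self_eq_neg.mp h.symm

lemma norm_mulVec_le_of_abs_le {m n : Type*} [Fintype m] [Fintype n] {S : Matrix m n ℝ}
    {M : ℝ} (hM : 0 ≤ M) (hS : ∀ i j, |S i j| ≤ M) (v : n → ℝ) :
    ‖S *ᵥ v‖ ≤ Fintype.card n * M * ‖v‖ := by
  refine (pi_norm_le_iff_of_nonneg (by positivity)).2 fun i => ?_
  calc ‖(S *ᵥ v) i‖ ≤ ∑ j, |S i j| * ‖v j‖ := by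
        simpa [mulVec, dotProduct, abs_mul] using abs_sum_le_sum_abs (fun j => S i j * v j) univ
    _ ≤ ∑ _j : n, M * ‖v‖ := by gcongr with j; exacts [hS i j, norm_le_pi_norm v j]
    _ = Fintype.card n * M * ‖v‖ := by simp [mul_assoc]

lemma ContinuousLinearMap.norm_le_of_norm_apply_single_le {ι F : Type*} [Fintype ι]
    [DecidableEq ι] [NormedAddCommGroup F] [NormedSpace ℝ F] (f : (ι → ℝ) →L[ℝ] F) {c : ℝ}
    (hc0 : 0 ≤ c) (hc : ∀ i, ‖f (Pi.single i 1)‖ ≤ c) : ‖f‖ ≤ Fintype.card ι * c := by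
  refine f.opNorm_le_bound (by positivity) fun v => ?_
  have hv : f v = ∑ i, v i • f (Pi.single i 1) := by
    conv_lhs => rw [← univ_sum_single v]
    simp [map_sum, ← map_smul, ← Pi.single_smul]
  calc ‖f v‖ ≤ ∑ i, ‖v i‖ * ‖f (Pi.single i 1)‖ := by
        simpa [hv, norm_smul] using norm_sum_le univ fun i => v i • f (Pi.single i 1)
    _ ≤ ∑ _i : ι, ‖v‖ * c := by gcongr with i; exacts [norm_le_pi_norm v i, hc i]
    _ = Fintype.card ι * c * ‖v‖ := by simp; ring

lemma norm_smul_add_sqrt_smul_le {E : Type*} [SeminormedAddCommGroup E] [NormedSpace ℝ E]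
    {h : ℝ} (h0 : 0 ≤ h) (h1 : h ≤ 1) (β w : E) :
    ‖h • β + √h • w‖ ≤ √h * (‖β‖ + ‖w‖) := by
  calc ‖h • β + √h • w‖ ≤ h * ‖β‖ + √h * ‖w‖ := by
        simpa [norm_smul, abs_of_nonneg h0, abs_of_nonneg (sqrt_nonneg h)] using
          norm_add_le (h • β) (√h • w)
    _ ≤ √h * ‖β‖ + √h * ‖w‖ := by gcongr; exact le_sqrt_self_iff.mpr h1
    _ = √h * (‖β‖ + ‖w‖) := by ring

section Taylor

variable {E F : Type*} [NormedAddCommGroup E] [NormedSpace ℝ E] [NormedAddCommGroup F]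
  [NormedSpace ℝ F] {f : E → F} {L : ℝ}

lemma norm_image_add_sub_sub_fderiv_le (hf : ContDiff ℝ 2 f)
    (hL : ∀ y, ‖fderiv ℝ (fderiv ℝ f) y‖ ≤ L) (x v : E) :
    ‖f (x + v) - f x - fderiv ℝ f x v‖ ≤ L * ‖v‖ ^ 2 := by
  have hL0 : 0 ≤ L := (norm_nonneg (fderiv ℝ (fderiv ℝ f) x)).trans (hL x)
  have hDf : ∀ y, ‖fderiv ℝ f y - fderiv ℝ f x‖ ≤ L * ‖y - x‖ := fun y =>
    convex_univ.norm_image_sub_le_of_norm_fderiv_le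
      (fun z _ => (hf.fderiv_right (m := 1) (by norm_num)).differentiable (by norm_num) z)
      (fun z _ => hL z) (Set.mem_univ x) (Set.mem_univ y)
  have key := (convex_closedBall x ‖v‖).norm_image_sub_le_of_norm_fderiv_le'
    (fun z _ => (hf.differentiable (by norm_num)) z)
    (fun z hz => (hDf z).trans (mul_le_mul_of_nonneg_left (mem_closedBall_iff_norm.1 hz) hL0))
    (Metric.mem_closedBall_self (norm_nonneg v)) (by simp : x + v ∈ Metric.closedBall x ‖v‖)
  simpa [sq, mul_assoc] using key

end Taylor

section Increment

variable {E T : Type*} [NormedAddCommGroup E] [NormedSpace ℝ E] {f : E → ℝ} {G L P Q h : ℝ}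
  (x : E) {β : E}

lemma abs_image_euler_step_sub_le (hf : Differentiable ℝ f) (hG : ∀ y, ‖fderiv ℝ f y‖ ≤ G)
    (hβ : ‖β‖ ≤ P) {w : E} (hw : ‖w‖ ≤ Q) (h0 : 0 ≤ h) (h1 : h ≤ 1) :
    |f (x + h • β + √h • w) - f x| ≤ G * (P + Q) * √h := by
  have hG0 : 0 ≤ G := (norm_nonneg (fderiv ℝ f x)).trans (hG x)
  have := convex_univ.norm_image_sub_le_of_norm_fderiv_le (fun z _ => hf z) (fun z _ => hG z)
    (Set.mem_univ x) (Set.mem_univ (x + h • β + √h • w))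
  rw [← norm_eq_abs]
  refine this.trans ?_
  rw [add_assoc, add_sub_cancel_left, mul_assoc]
  gcongr
  refine (norm_smul_add_sqrt_smul_le h0 h1 β w).trans ?_
  rw [mul_comm]; gcongr

lemma sum_image_euler_step_sub_le (hf : ContDiff ℝ 2 f) (hG : ∀ y, ‖fderiv ℝ f y‖ ≤ G)
    (hL : ∀ y, ‖fderiv ℝ (fderiv ℝ f) y‖ ≤ L) (hβ : ‖β‖ ≤ P) [Fintype T] {w : T → E}
    (hw : ∀ t, ‖w t‖ ≤ Q) (hw0 : ∑ t, w t = 0) (h0 : 0 ≤ h) (h1 : h ≤ 1) :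
    ∑ t, (f (x + h • β + √h • w t) - f x)
      ≤ Fintype.card T * ((G * P + L * (P + Q) ^ 2) * h) := by
  have hL0 : 0 ≤ L := (norm_nonneg (fderiv ℝ (fderiv ℝ f) x)).trans (hL x)
  have hstep : ∀ t, f (x + h • β + √h • w t) - f x
      ≤ h * fderiv ℝ f x β + √h * fderiv ℝ f x (w t) + L * (P + Q) ^ 2 * h := by
    intro t
    have hv : ‖h • β + √h • w t‖ ^ 2 ≤ (P + Q) ^ 2 * h := by
      calc ‖h • β + √h • w t‖ ^ 2 ≤ (√h * (‖β‖ + ‖w t‖)) ^ 2 := by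
            gcongr; exact norm_smul_add_sqrt_smul_le h0 h1 β (w t)
        _ ≤ (√h * (P + Q)) ^ 2 := by have := hw t; gcongr
        _ = (P + Q) ^ 2 * h := by rw [mul_pow, sq_sqrt h0, mul_comm]
    have htaylor := norm_image_add_sub_sub_fderiv_le hf hL x (h • β + √h • w t)
    rw [Real.norm_eq_abs, abs_le, map_add, map_smul, map_smul, ← add_assoc] at htaylor
    simp only [smul_eq_mul] at htaylor
    linarith [mul_le_mul_of_nonneg_left hv hL0]
  have hDβ : fderiv ℝ f x β ≤ G * P :=
    (le_abs_self _).trans <| ((fderiv ℝ f x).le_opNorm β).trans <|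
      mul_le_mul (hG x) hβ (norm_nonneg β) ((norm_nonneg _).trans (hG x))
  calc ∑ t, (f (x + h • β + √h • w t) - f x)
      ≤ ∑ t, (h * fderiv ℝ f x β + √h * fderiv ℝ f x (w t) + L * (P + Q) ^ 2 * h) :=
        sum_le_sum fun t _ => hstep t
    _ = Fintype.card T * ((fderiv ℝ f x β + L * (P + Q) ^ 2) * h) := by
        rw [sum_add_distrib, sum_add_distrib, ← mul_sum univ _ √h, ← map_sum, hw0]
        simp only [map_zero, mul_zero, add_zero, sum_const, card_univ, nsmul_eq_mul]
        ring
    _ ≤ Fintype.card T * ((G * P + L * (P + Q) ^ 2) * h) := by gcongr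

end Increment

lemma exp_le_one_add_add_sq {u : ℝ} (hu : |u| ≤ 1) : exp u ≤ 1 + u + u ^ 2 := by
  linarith [(abs_le.1 (abs_exp_sub_one_sub_id_le hu)).2]

lemma exp_neg_mul_add_mul_le {K₁ K₂ C h Δ : ℝ} (hK₁ : 0 ≤ K₁) (hK₂ : 0 ≤ K₂) (h0 : 0 ≤ h)
    (hΔ : |Δ| ≤ C * √h) (hsmall : K₁ * h + K₂ * (C * √h) ≤ 1) :
    exp (-K₁ * h + K₂ * Δ)
      ≤ 1 - K₁ * h + K₂ * Δ + 2 * (K₁ ^ 2 * h ^ 2 + K₂ ^ 2 * C ^ 2 * h) := by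
  have hu : |-K₁ * h + K₂ * Δ| ≤ K₁ * h + K₂ * (C * √h) := by
    calc |-K₁ * h + K₂ * Δ| ≤ |-K₁ * h| + |K₂ * Δ| := abs_add_le _ _
      _ ≤ K₁ * h + K₂ * (C * √h) := by
        rw [abs_mul, abs_mul, abs_neg, abs_of_nonneg hK₁, abs_of_nonneg hK₂, abs_of_nonneg h0]
        gcongr
  have hsq : (-K₁ * h + K₂ * Δ) ^ 2 ≤ 2 * (K₁ ^ 2 * h ^ 2 + K₂ ^ 2 * C ^ 2 * h) := by
    calc (-K₁ * h + K₂ * Δ) ^ 2 = |-K₁ * h + K₂ * Δ| ^ 2 := (sq_abs _).symm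
      _ ≤ (K₁ * h + K₂ * (C * √h)) ^ 2 := by gcongr
      _ ≤ 2 * ((K₁ * h) ^ 2 + (K₂ * (C * √h)) ^ 2) := add_sq_le
      _ = 2 * (K₁ ^ 2 * h ^ 2 + K₂ ^ 2 * C ^ 2 * h) := by
        rw [mul_pow, mul_pow, mul_pow, sq_sqrt h0]; ring
  linarith [exp_le_one_add_add_sq (hu.trans hsmall)]

lemma exists_decay_rate_sum_exp_le {K₂ C : ℝ} (hK₂ : 0 ≤ K₂) (hC : 0 ≤ C) :
    ∃ K₁ : ℝ, 0 < K₁ ∧ ∃ h₀ : ℝ, 0 < h₀ ∧ h₀ < 1 ∧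
      ∀ (T : Type*) [Fintype T] (Δ : T → ℝ) (h : ℝ), 0 < h → h ≤ h₀ →
        (∀ t, |Δ t| ≤ C * √h) → ∑ t, Δ t ≤ Fintype.card T * (C * h) →
        ∑ t, exp (-K₁ * h + K₂ * Δ t) ≤ Fintype.card T * (1 - h) := by
  -- `K₁ - 1` pays for the `O(h)` term `K₂ C h + 2 K₂² C² h` of the mean, with a margin `h`
  -- that absorbs `2 K₁² h²` once `4 K₁² h ≤ 1`
  obtain ⟨K₁, hK₁⟩ : ∃ K₁ : ℝ, K₁ = 2 + K₂ * C + 2 * (K₂ ^ 2 * C ^ 2) := ⟨_, rfl⟩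
  have hK₁2 : 2 ≤ K₁ := by rw [hK₁]; nlinarith [mul_nonneg hK₂ hC]
  refine ⟨K₁, by linarith, 1 / (4 * (K₁ ^ 2 + K₂ ^ 2 * C ^ 2)), by positivity,
    (div_lt_one (by positivity)).2 (by nlinarith), ?_⟩
  intro T _ Δ h h0 hh₀ hΔ hsum
  have hh : 4 * (K₁ ^ 2 + K₂ ^ 2 * C ^ 2) * h ≤ 1 := by
    rwa [le_div_iff₀ (by positivity), mul_comm] at hh₀
  have hK₁h : 4 * K₁ ^ 2 * h ≤ 1 := by nlinarith [mul_nonneg (sq_nonneg (K₂ * C)) h0.le]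
  have hsmall : K₁ * h + K₂ * (C * √h) ≤ 1 := by
    have hdrift : K₁ * h ≤ 1 / 2 := by nlinarith [mul_le_mul_of_nonneg_right hK₁2 h0.le]
    have hdiffusion : K₂ * (C * √h) ≤ 1 / 2 := by
      refine le_of_sq_le_sq ?_ (by norm_num)
      rw [mul_pow, mul_pow, sq_sqrt h0.le]
      nlinarith
    linarith
  have hrate :
      1 - K₁ * h + 2 * (K₁ ^ 2 * h ^ 2 + K₂ ^ 2 * C ^ 2 * h) + K₂ * (C * h) ≤ 1 - h := by
    have hK₁h' : K₁ * h = 2 * h + K₂ * (C * h) + 2 * (K₂ ^ 2 * C ^ 2 * h) := by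
      rw [hK₁]; ring
    linarith [mul_le_mul_of_nonneg_left hK₁h h0.le]
  calc ∑ t, exp (-K₁ * h + K₂ * Δ t)
      ≤ ∑ t, (1 - K₁ * h + 2 * (K₁ ^ 2 * h ^ 2 + K₂ ^ 2 * C ^ 2 * h) + K₂ * Δ t) :=
        sum_le_sum fun t _ => by
          linarith [exp_neg_mul_add_mul_le (by linarith) hK₂ h0.le (hΔ t) hsmall]
    _ = Fintype.card T * (1 - K₁ * h + 2 * (K₁ ^ 2 * h ^ 2 + K₂ ^ 2 * C ^ 2 * h))
          + K₂ * ∑ t, Δ t := by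
        rw [sum_add_distrib, ← mul_sum, sum_const, card_univ, nsmul_eq_mul]
    _ ≤ Fintype.card T * (1 - K₁ * h + 2 * (K₁ ^ 2 * h ^ 2 + K₂ ^ 2 * C ^ 2 * h))
          + K₂ * (Fintype.card T * (C * h)) := by gcongr
    _ = Fintype.card T * (1 - K₁ * h + 2 * (K₁ ^ 2 * h ^ 2 + K₂ ^ 2 * C ^ 2 * h)
          + K₂ * (C * h)) := by ring
    _ ≤ Fintype.card T * (1 - h) := by gcongr

theorem barrier_interior_step_general (d : ℕ) (M K₂ : ℝ) (hM : 0 < M)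
    (hK₂ : 0 < K₂) :
    ∃ K₁ : ℝ, 0 < K₁ ∧ ∃ h₀ : ℝ, 0 < h₀ ∧ h₀ < 1 ∧
      ∀ B : (Fin d → ℝ) → ℝ, ContDiff ℝ 2 B →
      (∀ y : Fin d → ℝ, |B y| ≤ M) →
      (∀ (y : Fin d → ℝ) (i : Fin d), |fderiv ℝ B y (Pi.single i 1)| ≤ M) →
      (∀ (y : Fin d → ℝ) (i j : Fin d),
        |iteratedFDeriv ℝ 2 B y ![Pi.single i 1, Pi.single j 1]| ≤ M) →
      ∀ (β : Fin d → ℝ) (S : Matrix (Fin d) (Fin d) ℝ),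
        (∀ i, |β i| ≤ M) → (∀ i j, |S i j| ≤ M) →
      ∀ (x : Fin d → ℝ) (h : ℝ), 0 < h → h ≤ h₀ →
      (∑ ε : Fin d → Bool,
          Real.exp (-K₁ * h +
            K₂ * (B (x + h • β
                + Real.sqrt h • S.mulVec (fun i => if ε i then (1 : ℝ) else -1))
              - B x))) / 2 ^ d
        ≤ 1 - h := by
  -- `C = G (P + Q) + L (P + Q)²` for the bounds `G = dM` on `DB`, `L = d²M` on `D²B`,
  -- `P = M` on `β` and `Q = dM` on `Sξ`
  obtain ⟨K₁, hK₁, h₀, hh₀, hh₀1, hstep⟩ := exists_decay_rate_sum_exp_le hK₂.le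
    (C := d * M * (M + d * M) + d * (d * M) * (M + d * M) ^ 2) (by positivity)
  refine ⟨K₁, hK₁, h₀, hh₀, hh₀1, fun B hB _ hB1 hB2 β S hβ hS x h hh hhh₀ => ?_⟩
  have hG : ∀ y, ‖fderiv ℝ B y‖ ≤ d * M := fun y => by
    simpa using (fderiv ℝ B y).norm_le_of_norm_apply_single_le hM.le (by simpa using hB1 y)
  have hL : ∀ y, ‖fderiv ℝ (fderiv ℝ B) y‖ ≤ d * (d * M) := fun y => by
    simpa using (fderiv ℝ (fderiv ℝ B) y).norm_le_of_norm_apply_single_le (by positivity)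
      fun i => (fderiv ℝ (fderiv ℝ B) y (Pi.single i 1)).norm_le_of_norm_apply_single_le hM.le
        fun j => by simpa [iteratedFDeriv_two_apply] using hB2 y i j
  have hβ' : ‖β‖ ≤ M := (pi_norm_le_iff_of_nonneg hM.le).2 hβ
  have hw : ∀ ε, ‖S *ᵥ signVector ε‖ ≤ d * M := fun ε => by
    simpa using (norm_mulVec_le_of_abs_le hM.le hS (signVector ε)).trans
      (mul_le_of_le_one_right (by positivity) (norm_signVector_le ε))
  have hw0 : ∑ ε, S *ᵥ signVector ε = 0 := by
    rw [← mulVec_sum, sum_signVector, mulVec_zero]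
  have hh1 : h ≤ 1 := hhh₀.trans hh₀1.le
  have hcard : ((2 : ℝ) ^ d) = Fintype.card (Fin d → Bool) := by simp
  rw [div_le_iff₀ (by positivity), hcard, mul_comm (1 - h)]
  refine hstep (Fin d → Bool) (fun ε => B (x + h • β + √h • S *ᵥ signVector ε) - B x)
    h hh hhh₀ (fun ε => ?_) ?_
  · refine (abs_image_euler_step_sub_le x (hB.differentiable (by norm_num)) hG hβ' (hw ε)
      hh.le hh1).trans ?_
    exact mul_le_mul_of_nonneg_right (le_add_of_nonneg_right (by positivity)) (sqrt_nonneg h)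
  · refine (sum_image_euler_step_sub_le x hB hG hL hβ' hw hw0 hh.le hh1).trans ?_
    gcongr
    exact le_add_of_nonneg_right (by positivity)

/-- Interior (Case 1) barrier estimate of Lemma 5.6: for `K₁` large enough (depending
only on `d`, `M`, `K₂`) and `h` small, one interior Euler step with Rademacher
increments decreases the expected barrier `e^{-K₁ t} e^{K₂ B(·)}` by a factor `1 - h`.
The expectation over the Rademacher vector is the average over the `2^d` sign
patterns `ε : Fin d → Bool`. -/
theorem barrier_interior_step (d : ℕ) (hd : 1 ≤ d) (M K₂ : ℝ) (hM : 0 < M)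
    (hK₂ : 0 < K₂) :
    ∃ K₁ : ℝ, 0 < K₁ ∧ ∃ h₀ : ℝ, 0 < h₀ ∧ h₀ < 1 ∧
      ∀ B : (Fin d → ℝ) → ℝ, ContDiff ℝ 2 B →
      (∀ y : Fin d → ℝ, |B y| ≤ M) →
      (∀ (y : Fin d → ℝ) (i : Fin d), |fderiv ℝ B y (Pi.single i 1)| ≤ M) →
      (∀ (y : Fin d → ℝ) (i j : Fin d),
        |iteratedFDeriv ℝ 2 B y ![Pi.single i 1, Pi.single j 1]| ≤ M) →
      ∀ (β : Fin d → ℝ) (S : Matrix (Fin d) (Fin d) ℝ),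
        (∀ i, |β i| ≤ M) → (∀ i j, |S i j| ≤ M) →
      ∀ (x : Fin d → ℝ) (h : ℝ), 0 < h → h ≤ h₀ →
      (∑ ε : Fin d → Bool,
          Real.exp (-K₁ * h +
            K₂ * (B (x + h • β
                + Real.sqrt h • S.mulVec (fun i => if ε i then (1 : ℝ) else -1))
              - B x))) / 2 ^ d
        ≤ 1 - h :=
  barrier_interior_step_general d M K₂ hM hK₂
end
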